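/- Let n, k ∈ ℕ with k < n, let H ⊆ ℝ with |H| ≥ n+1, let ω = (ω₁, …, ω_n) : H → ℝⁿ be an n-dimensional positive Chebyshev system over H such that ω_{⟨k⟩} and ω_{⟨k+1⟩} are k- and (k+1)-dimensional positive Chebyshev systems over H, and let f : H → ℝ. If f is ω-convex on H, then for each k-tuple x₁ < … < x_k in H, the function x ↦ [x₁, …, x_k, x; f]_{ω_{⟨k+1⟩}} is convex on H ∖ {x₁, …, x_k} with respect to the (n−k)-dimensional positive Chebyshev system formed by the functions x ↦ [x₁, …, x_k, x; ω_j]_{ω_{⟨k+1⟩}}, j ∈ {k+1, …, n}. -/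

import Mathlib

/-- `Φ_ω(x₁,…,x_m) = det(ω_i(x_j))`. -/
noncomputable def Phi {m : ℕ} (ω : Fin m → ℝ → ℝ) (x : Fin m → ℝ) : ℝ :=
  Matrix.det (Matrix.of fun i j => ω i (x j))

/-- `ω` is an `m`-dimensional positive Chebyshev system over `H`. -/
def IsPosChebyshev {m : ℕ} (ω : Fin m → ℝ → ℝ) (H : Set ℝ) : Prop :=
  ∀ x : Fin m → ℝ, (∀ i, x i ∈ H) → StrictMono x → 0 < Phi ω x

/-- `f` is convex with respect to the `m`-dimensional system `ω` on `S`. -/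
def IsConvexWRT {m : ℕ} (ω : Fin m → ℝ → ℝ) (S : Set ℝ) (f : ℝ → ℝ) : Prop :=
  ∀ x : Fin (m + 1) → ℝ, (∀ i, x i ∈ S) → StrictMono x → 0 ≤ Phi (Fin.snoc ω f) x

/-- The generalized divided difference `[x₁,…,x_k; f]_{ω⟨k⟩}`:
the numerator replaces the last function `ω_k` by `f`. -/
noncomputable def divDiff {k : ℕ} (ω : Fin k → ℝ → ℝ) (f : ℝ → ℝ) (x : Fin k → ℝ) : ℝ :=
  Phi (fun i => if (i : ℕ) + 1 = k then f else ω i) x / Phi ω x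

/-!
Put `u = ω⟨k⟩` and `P = Φ_u(x)`. The numerator of `[x, t; h]_{ω⟨k+1⟩}` is the determinant of
`(ω_i(x_j))` bordered by the row `h` and the column `t`, so by Sylvester's identity the
determinant of these numerators over `h ∈ {ω_{k+1}, …, ω_n, f}` and `t ∈ {y₀, …, y_{n-k}}`
is `P^{n-k} Φ_{(ω, f)}(x, y)`, and `P > 0`.

What remains is a sign count, since neither `(x, y)` nor `(x, y_j)` is increasing. Both
`Φ_v` and the Vandermonde determinant `V` are alternating, so at an injective tuple `z` in `H`,
`Φ_v(z) V(z)` is positive for a positive Chebyshev system `v` and nonnegative for an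
`ω`-convex `(ω, f)`. Finally `V(x, y) ∏_j V(x, y_j) = V(x)^{n-k+2} V(y) (∏_{i,j} (y_j - x_i))²` is
positive.
-/

open Finset Matrix

namespace Matrix

variable {R : Type*} [CommRing R] {ι κ : Type*} [Fintype ι] [DecidableEq ι]
  [Fintype κ] [DecidableEq κ]

/-- Sylvester's determinant identity, for the minors of `fromBlocks P Q C S` obtained by bordering
`P` with one row and one column. -/
theorem det_mul_det_bordered_minors (P : Matrix ι ι R) [Invertible P] (Q : Matrix ι κ R)
    (C : Matrix κ ι R) (S : Matrix κ κ R) :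
    P.det * (of fun i j => (fromBlocks P (of fun a (_ : Fin 1) => Q a j)
      (of fun (_ : Fin 1) b => C i b) (of fun _ _ => S i j)).det).det
      = P.det ^ Fintype.card κ * (fromBlocks P Q C S).det := by
  have hentry : (of fun i j => (fromBlocks P (of fun a (_ : Fin 1) => Q a j)
      (of fun (_ : Fin 1) b => C i b) (of fun _ _ => S i j)).det) = P.det • (S - C * ⅟P * Q) := by
    ext i j
    rw [of_apply, det_fromBlocks₁₁, det_fin_one]
    simp [mul_apply, sub_apply]
  rw [hentry, det_smul, det_fromBlocks₁₁]
  ring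

end Matrix

section Phi

variable {k m : ℕ}

theorem Phi_append (u : Fin k → ℝ → ℝ) (g : Fin m → ℝ → ℝ) (x : Fin k → ℝ) (y : Fin m → ℝ) :
    Phi (Fin.append u g) (Fin.append x y) =
      (fromBlocks (of fun i j => u i (x j)) (of fun i j => u i (y j))
        (of fun i j => g i (x j)) (of fun i j => g i (y j))).det := by
  rw [Phi, ← det_submatrix_equiv_self finSumFinEquiv]
  congr 1
  ext (i | i) (j | j) <;> simp

theorem Phi_snoc_snoc (u : Fin k → ℝ → ℝ) (h : ℝ → ℝ) (x : Fin k → ℝ) (t : ℝ) :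
    Phi (Fin.snoc u h) (Fin.snoc x t) =
      (fromBlocks (of fun i j => u i (x j)) (of fun i (_ : Fin 1) => u i t)
        (of fun _ j => h (x j)) (of fun _ _ => h t)).det := by
  rw [← Fin.append_right_eq_snoc u (fun _ => h), ← Fin.append_right_eq_snoc x (fun _ => t),
    Phi_append]

theorem Phi_comp_perm (v : Fin m → ℝ → ℝ) (z : Fin m → ℝ) (σ : Equiv.Perm (Fin m)) :
    Phi v (z ∘ σ) = σ.sign * Phi v z :=
  det_permute' σ (of fun i j => v i (z j))

theorem Phi_mul_det_Phi_snoc_snoc (u : Fin k → ℝ → ℝ) (g : Fin m → ℝ → ℝ)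
    (x : Fin k → ℝ) (y : Fin m → ℝ) (hu : Phi u x ≠ 0) :
    Phi u x * (of fun i j => Phi (Fin.snoc u (g i)) (Fin.snoc x (y j))).det =
      Phi u x ^ m * Phi (Fin.append u g) (Fin.append x y) := by
  let P : Matrix (Fin k) (Fin k) ℝ := of fun i j => u i (x j)
  have : Invertible P := P.invertibleOfIsUnitDet (isUnit_iff_ne_zero.2 hu)
  simp_rw [Phi_snoc_snoc, Phi_append]
  have := det_mul_det_bordered_minors P (of fun i j => u i (y j)) (of fun i j => g i (x j))
    (of fun i j => g i (y j))
  rwa [Fintype.card_fin] at this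

end Phi

section Vandermonde

variable {R : Type*} [CommRing R] {k m : ℕ}

theorem det_vandermonde_comp_perm (z : Fin m → R) (σ : Equiv.Perm (Fin m)) :
    (vandermonde (z ∘ σ)).det = σ.sign * (vandermonde z).det :=
  det_permute σ (vandermonde z)

theorem det_vandermonde_eq_prod_prod_ite (z : Fin m → R) :
    (vandermonde z).det = ∏ i, ∏ j, if i < j then z j - z i else 1 := by
  rw [det_vandermonde]
  refine prod_congr rfl fun i _ => ?_
  rw [← prod_filter]
  congr
  ext j
  simp

theorem det_vandermonde_append (x : Fin k → R) (y : Fin m → R) :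
    (vandermonde (Fin.append x y)).det =
      (vandermonde x).det * (vandermonde y).det * ∏ i, ∏ j, (y j - x i) := by
  have hlt (i : Fin k) (j : Fin m) : Fin.castAdd m i < Fin.natAdd k j := by
    simp only [Fin.lt_def, Fin.val_castAdd, Fin.val_natAdd]
    omega
  have hcast (i j : Fin k) : Fin.castAdd m i < Fin.castAdd m j ↔ i < j := .rfl
  have hnlt (i : Fin k) (j : Fin m) : ¬Fin.natAdd k j < Fin.castAdd m i := (hlt i j).asymm
  simp_rw [det_vandermonde_eq_prod_prod_ite, Fin.prod_univ_add, Fin.append_left, Fin.append_right]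
  simp only [hlt, hnlt, hcast, Fin.natAdd_lt_natAdd_iff, if_true, if_false,
    prod_const_one, prod_mul_distrib]
  ring

theorem det_vandermonde_snoc (x : Fin k → R) (t : R) :
    (vandermonde (Fin.snoc x t)).det = (vandermonde x).det * ∏ i, (t - x i) := by
  rw [← Fin.append_right_eq_snoc x (fun _ : Fin 1 => t), det_vandermonde_append]
  simp

end Vandermonde

theorem det_vandermonde_pos {m : ℕ} {z : Fin m → ℝ} (hz : StrictMono z) :
    0 < (vandermonde z).det := by
  rw [det_vandermonde]
  exact prod_pos fun i _ => prod_pos fun j hj => sub_pos.2 (hz (mem_Ioi.1 hj))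

theorem det_vandermonde_append_mul_prod_snoc_pos {k m : ℕ} {x : Fin k → ℝ} {y : Fin m → ℝ}
    (hx : StrictMono x) (hy : StrictMono y) (hxy : ∀ j, y j ∉ Set.range x) :
    0 < (vandermonde (Fin.append x y)).det * ∏ j, (vandermonde (Fin.snoc x (y j))).det := by
  have hcross : (∏ i, ∏ j, (y j - x i)) ≠ 0 :=
    prod_ne_zero_iff.2 fun i _ => prod_ne_zero_iff.2 fun j _ =>
      sub_ne_zero.2 fun h => hxy j ⟨i, h.symm⟩
  have hx0 := det_vandermonde_pos hx
  have hy0 := det_vandermonde_pos hy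
  have : (vandermonde (Fin.append x y)).det * ∏ j, (vandermonde (Fin.snoc x (y j))).det =
      (vandermonde x).det ^ (m + 1) * (vandermonde y).det * (∏ i, ∏ j, (y j - x i)) ^ 2 := by
    simp_rw [det_vandermonde_append, det_vandermonde_snoc, prod_mul_distrib, prod_const,
      card_univ, Fintype.card_fin, prod_comm (s := univ (α := Fin m))]
    ring
  rw [this]
  positivity

theorem Phi_mul_det_vandermonde_comp_perm {m : ℕ} (v : Fin m → ℝ → ℝ) (z : Fin m → ℝ)
    (σ : Equiv.Perm (Fin m)) :
    Phi v (z ∘ σ) * (vandermonde (z ∘ σ)).det = Phi v z * (vandermonde z).det := by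
  have hsign : ((σ.sign : ℤ) : ℝ) * σ.sign = 1 := by
    rw [← Int.cast_mul, ← Units.val_mul, Int.units_mul_self, Units.val_one, Int.cast_one]
  rw [Phi_comp_perm, det_vandermonde_comp_perm, Int.cast_comm]
  linear_combination (Phi v z * (vandermonde z).det) * hsign

theorem exists_perm_strictMono_comp {m : ℕ} {z : Fin m → ℝ} (hz : Function.Injective z) :
    ∃ σ : Equiv.Perm (Fin m), StrictMono (z ∘ σ) :=
  ⟨Tuple.sort z, (Tuple.monotone_sort z).strictMono_of_injective
    (hz.comp (Tuple.sort z).injective)⟩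

theorem IsPosChebyshev.Phi_mul_det_vandermonde_pos {m : ℕ} {v : Fin m → ℝ → ℝ} {H : Set ℝ}
    (hv : IsPosChebyshev v H) {z : Fin m → ℝ} (hzH : ∀ i, z i ∈ H)
    (hz : Function.Injective z) : 0 < Phi v z * (vandermonde z).det := by
  obtain ⟨σ, hσ⟩ := exists_perm_strictMono_comp hz
  rw [← Phi_mul_det_vandermonde_comp_perm v z σ]
  exact mul_pos (hv _ (fun i => hzH _) hσ) (det_vandermonde_pos hσ)

theorem IsConvexWRT.Phi_snoc_mul_det_vandermonde_nonneg {m : ℕ} {ω : Fin m → ℝ → ℝ}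
    {H : Set ℝ} {f : ℝ → ℝ} (hf : IsConvexWRT ω H f) {z : Fin (m + 1) → ℝ}
    (hzH : ∀ i, z i ∈ H) (hz : Function.Injective z) :
    0 ≤ Phi (Fin.snoc ω f) z * (vandermonde z).det := by
  obtain ⟨σ, hσ⟩ := exists_perm_strictMono_comp hz
  rw [← Phi_mul_det_vandermonde_comp_perm _ z σ]
  exact mul_nonneg (hf _ (fun i => hzH _) hσ) (det_vandermonde_pos hσ).le

theorem divDiff_eq {k : ℕ} (w : Fin (k + 1) → ℝ → ℝ) (h : ℝ → ℝ) (z : Fin (k + 1) → ℝ) :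
    divDiff w h z = Phi (Fin.snoc (Fin.init w) h) z / Phi w z := by
  unfold divDiff
  congr 2
  funext i
  induction i using Fin.lastCases with
  | last => simp
  | cast i => simp [Fin.init, i.isLt.ne]

theorem Phi_divDiff_snoc {k m : ℕ} (w : Fin (k + 1) → ℝ → ℝ) (g : Fin m → ℝ → ℝ)
    (x : Fin k → ℝ) (y : Fin m → ℝ) :
    Phi (fun i t => divDiff w (g i) (Fin.snoc x t)) y =
      (of fun i j => Phi (Fin.snoc (Fin.init w) (g i)) (Fin.snoc x (y j))).det /
        ∏ j, Phi w (Fin.snoc x (y j)) := by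
  simp_rw [Phi, divDiff_eq, div_eq_inv_mul, ← prod_inv_distrib]
  exact det_mul_row (fun j => (Phi w (Fin.snoc x (y j)))⁻¹) _

theorem div_prod_nonneg_of_mul_nonneg {ι : Type*} [Fintype ι] {a va : ℝ} {b vb : ι → ℝ}
    (ha : 0 ≤ a * va) (hb : ∀ j, 0 < b j * vb j) (hv : 0 < va * ∏ j, vb j) :
    0 ≤ a / ∏ j, b j := by
  have hbv : 0 < (∏ j, b j) * ∏ j, vb j := by
    rw [← prod_mul_distrib]
    exact prod_pos fun j _ => hb j
  have hab : 0 ≤ a * ∏ j, b j := by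
    refine nonneg_of_mul_nonneg_left (b := va * ∏ j, vb j) ?_ hv
    calc 0 ≤ (a * va) * ((∏ j, b j) * ∏ j, vb j) := mul_nonneg ha hbv.le
      _ = (a * ∏ j, b j) * (va * ∏ j, vb j) := by ring
  have hb0 : ∏ j, b j ≠ 0 := left_ne_zero_of_mul hbv.ne'
  calc 0 ≤ (a * ∏ j, b j) * ((∏ j, b j)⁻¹) ^ 2 := mul_nonneg hab (sq_nonneg _)
    _ = a / ∏ j, b j := by field_simp

theorem IsConvexWRT.divDiff_snoc {k m : ℕ} {H : Set ℝ} {w : Fin (k + 1) → ℝ → ℝ}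
    {g : Fin m → ℝ → ℝ} {h : ℝ → ℝ} (hh : IsConvexWRT (Fin.append (Fin.init w) g) H h)
    (hw : IsPosChebyshev w H) (hinit : IsPosChebyshev (Fin.init w) H)
    {x : Fin k → ℝ} (hxH : ∀ i, x i ∈ H) (hx : StrictMono x) :
    IsConvexWRT (fun j t => divDiff w (g j) (Fin.snoc x t)) (H \ Set.range x)
      (fun t => divDiff w h (Fin.snoc x t)) := by
  intro y hyS hy
  have hV := det_vandermonde_append_mul_prod_snoc_pos hx hy fun j => (hyS j).2
  have happendH : ∀ i, Fin.append x y i ∈ H :=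
    Fin.addCases (fun i => by simpa using hxH i) (fun j => by simpa using (hyS j).1)
  have hnum : 0 ≤ Phi (Fin.append (Fin.init w) (Fin.snoc g h)) (Fin.append x y) *
      (vandermonde (Fin.append x y)).det := by
    rw [Fin.append_snoc]
    exact hh.Phi_snoc_mul_det_vandermonde_nonneg happendH
      (det_vandermonde_ne_zero_iff.1 (left_ne_zero_of_mul hV.ne'))
  have hden (j : Fin (m + 1)) :
      0 < Phi w (Fin.snoc x (y j)) * (vandermonde (Fin.snoc x (y j))).det := by
    refine hw.Phi_mul_det_vandermonde_pos (fun i => ?_) (det_vandermonde_ne_zero_iff.1 ?_)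
    · induction i using Fin.lastCases <;> simp [hxH, (hyS j).1]
    · exact prod_ne_zero_iff.1 (right_ne_zero_of_mul hV.ne') j (mem_univ j)
  have hP : 0 < Phi (Fin.init w) x := hinit x hxH hx
  have hsylvester :
      (of fun i j => Phi (Fin.snoc (Fin.init w) (Fin.snoc (α := fun _ => ℝ → ℝ) g h i))
        (Fin.snoc x (y j))).det =
        Phi (Fin.init w) x ^ m * Phi (Fin.append (Fin.init w) (Fin.snoc g h)) (Fin.append x y) := by
    have := Phi_mul_det_Phi_snoc_snoc (Fin.init w) (Fin.snoc g h) x y hP.ne'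
    rw [pow_succ', mul_assoc] at this
    exact mul_left_cancel₀ hP.ne' this
  have hsystem : Fin.snoc (α := fun _ => ℝ → ℝ) (fun j t => divDiff w (g j) (Fin.snoc x t))
      (fun t => divDiff w h (Fin.snoc x t)) =
        fun i t => divDiff w (Fin.snoc (α := fun _ => ℝ → ℝ) g h i) (Fin.snoc x t) :=
    (Fin.comp_snoc (fun h t => divDiff w h (Fin.snoc x t)) g h).symm
  rw [hsystem, Phi_divDiff_snoc]
  refine div_prod_nonneg_of_mul_nonneg ?_ hden hV
  rw [hsylvester, mul_assoc]
  exact mul_nonneg (pow_nonneg hP.le _) hnum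

theorem append_castLE_eq_comp_cast {α : Type*} {k n : ℕ} (hk : k ≤ n) (ω : Fin n → α) :
    Fin.append (fun i : Fin k => ω (Fin.castLE hk i)) (fun j : Fin (n - k) => ω ⟨k + j, by omega⟩) =
      ω ∘ Fin.cast (by omega) := by
  funext i
  refine Fin.addCases (fun i => ?_) (fun j => ?_) i
  · rw [Fin.append_left]
    rfl
  · rw [Fin.append_right]
    rfl

theorem IsConvexWRT.comp_cast {m m' : ℕ} {ω : Fin m → ℝ → ℝ} {H : Set ℝ} {f : ℝ → ℝ}
    (hf : IsConvexWRT ω H f) (h : m' = m) : IsConvexWRT (ω ∘ Fin.cast h) H f := by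
  subst h
  exact hf

/-- Theorem 2, (i) ⇒ (ii): if `f` is `ω`-convex on `H`, then for each `x₁ < … < x_k` in `H`
the function `x ↦ [x₁,…,x_k,x; f]_{ω⟨k+1⟩}` is convex on `H \ {x₁,…,x_k}` with respect to the
`(n-k)`-dimensional Chebyshev system `x ↦ [x₁,…,x_k,x; ω_j]_{ω⟨k+1⟩}`, `j ∈ {k+1,…,n}`. -/
theorem omega_convex_implies_divided_difference_convex (n k : ℕ) (hk : k < n) (H : Set ℝ)
    (ω : Fin n → ℝ → ℝ) (f : ℝ → ℝ)
    (hωk : IsPosChebyshev (fun i : Fin k => ω (Fin.castLE (by omega) i)) H)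
    (hωk1 : IsPosChebyshev (fun i : Fin (k + 1) => ω (Fin.castLE hk i)) H)
    (hf : IsConvexWRT ω H f)
    (x : Fin k → ℝ) (hxH : ∀ i, x i ∈ H) (hx : StrictMono x) :
    IsConvexWRT
      (fun j : Fin (n - k) => fun y : ℝ =>
        divDiff (fun i : Fin (k + 1) => ω (Fin.castLE hk i))
          (ω ⟨k + (j : ℕ), by have := j.isLt; omega⟩) (Fin.snoc x y))
      (H \ Set.range x)
      (fun y : ℝ =>
        divDiff (fun i : Fin (k + 1) => ω (Fin.castLE hk i)) f (Fin.snoc x y)) := by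
  have hsplit := hf.comp_cast (by omega : k + (n - k) = n)
  rw [← append_castLE_eq_comp_cast hk.le] at hsplit
  exact hsplit.divDiff_snoc hωk1 hωk hxH hx
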